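/- arXiv:0910.5730 — 6 statements merged into one kernel-verified Lean document; each statement's English description precedes it below -/
import Mathlib

section
/- Fix γ > 0, write γ_x = (1+γ)^x − 1 for real x > 0, and let S = S(γ) = sup_{j≥1} Σ_{i=0}^∞ γ_j/γ_{j+i}. Let α be a real number with α > 1 + 2S and γ_{a/2}/γ_a < 1/S, where a = ⌊α⌋. Define t_j = 0 for integers 0 ≤ j ≤ a − 1 and t_j = (1 − (α − a))·γ/γ_a + Σ_{i=1}^{j−a} γ/γ_{a+i} for integers j ≥ a. Then for every n ≥ 0 and every integer 1 ≤ j ≤ a + n: min(j, α)·γ/γ_j > (t_{a+n−1} − t_{j−1}) + γ/γ_{a+n}. -/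
/-!
Write `c m = γ / ((1 + γ) ^ m - 1)`. Since `t` grows by `c (k + 1)` at each step `k ≥ a`, the
left side is a block `c j' + ⋯ + c (a + n)` of consecutive terms, with `j' = a` when `j ≤ a`
(the coefficient `1 - (α - a)` of `c a` is at most `1`) and `j' = j` otherwise. Factoring out
`c j'` leaves a partial sum of `Σ_i γ_{j'}/γ_{j'+i}`, so the block is at most `c j' * S`.
For `j > a` this is `< α * c j` because `S < α`. For `j ≤ a` it is `< a * c a ≤ j * c j`,
because `2 S < α < a + 1` and `m ↦ m / ((1 + γ) ^ m - 1)` is decreasing.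
-/

open Finset

section PowSubOne

variable {q : ℝ}

lemma pow_sub_one_nonneg (hq : 1 ≤ q) (m : ℕ) : 0 ≤ q ^ m - 1 :=
  sub_nonneg.mpr (one_le_pow₀ hq)

lemma pow_sub_one_pos (hq : 1 < q) {m : ℕ} (hm : m ≠ 0) : 0 < q ^ m - 1 :=
  sub_pos.mpr (one_lt_pow₀ hq hm)

lemma pow_sub_one_le_mul (hq : 1 ≤ q) (m : ℕ) : q ^ m - 1 ≤ m * q ^ m * (q - 1) := by
  rw [← geom_sum_mul]
  gcongr
  calc ∑ i ∈ range m, q ^ i ≤ #(range m) • q ^ m :=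
        sum_le_card_nsmul _ _ _ fun i hi => pow_le_pow_right₀ hq (mem_range.mp hi).le
    _ = m * q ^ m := by simp

lemma antitoneOn_natCast_div_pow_sub_one (hq : 1 < q) :
    AntitoneOn (fun m : ℕ => (m : ℝ) / (q ^ m - 1)) {m | 1 ≤ m} := by
  refine antitoneOn_nat_Ici_of_succ_le fun m hm => ?_
  rw [div_le_div_iff₀ (pow_sub_one_pos hq (by omega)) (pow_sub_one_pos hq (by omega))]
  have := pow_sub_one_le_mul hq.le m
  push_cast
  rw [pow_succ]
  linarith

lemma pow_sub_one_div_pow_add_sub_one_le (hq : 1 ≤ q) (m i : ℕ) :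
    (q ^ m - 1) / (q ^ (m + i) - 1) ≤ q⁻¹ ^ i := by
  rcases (pow_sub_one_nonneg hq (m + i)).eq_or_lt with h | h
  · rw [← h, div_zero]
    positivity
  have hqi : 0 < q ^ i := by positivity
  rw [div_le_iff₀ h, inv_pow, inv_mul_eq_div, le_div_iff₀ hqi, pow_add]
  nlinarith [one_le_pow₀ (n := i) hq]

lemma summable_pow_sub_one_div_pow_add_sub_one (hq : 1 < q) (m : ℕ) :
    Summable fun i : ℕ => (q ^ m - 1) / (q ^ (m + i) - 1) :=
  .of_nonneg_of_le (fun i => div_nonneg (pow_sub_one_nonneg hq.le _) (pow_sub_one_nonneg hq.le _))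
    (pow_sub_one_div_pow_add_sub_one_le hq.le m)
    (summable_geometric_of_lt_one (by positivity) (inv_lt_one_of_one_lt₀ hq))

lemma bddAbove_range_tsum_pow_sub_one_div (hq : 1 < q) :
    BddAbove (Set.range fun m : ℕ => ∑' i : ℕ, (q ^ m - 1) / (q ^ (m + i) - 1)) := by
  refine ⟨∑' i : ℕ, q⁻¹ ^ i, ?_⟩
  rintro _ ⟨m, rfl⟩
  exact Summable.tsum_le_tsum (pow_sub_one_div_pow_add_sub_one_le hq.le m)
    (summable_pow_sub_one_div_pow_add_sub_one hq m)
    (summable_geometric_of_lt_one (by positivity) (inv_lt_one_of_one_lt₀ hq))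

lemma sum_range_div_pow_add_sub_one_le (hq : 1 < q) {x : ℝ} (hx : 0 ≤ x) {m : ℕ} (hm : m ≠ 0)
    (N : ℕ) :
    ∑ k ∈ range N, x / (q ^ (m + k) - 1) ≤
      x / (q ^ m - 1) * ∑' i : ℕ, (q ^ m - 1) / (q ^ (m + i) - 1) := by
  have hgm := (pow_sub_one_pos hq hm).ne'
  rw [sum_congr rfl fun k _ => (div_mul_div_cancel₀ (a := x) hgm).symm, ← mul_sum]
  refine mul_le_mul_of_nonneg_left ?_ (div_nonneg hx (pow_sub_one_nonneg hq.le m))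
  exact (summable_pow_sub_one_div_pow_add_sub_one hq m).sum_le_tsum _ fun i _ =>
    div_nonneg (pow_sub_one_nonneg hq.le _) (pow_sub_one_nonneg hq.le _)

lemma iSup_tsum_pow_sub_one_div_nonneg (hq : 1 ≤ q) :
    0 ≤ ⨆ j : ℕ, ∑' i : ℕ, (q ^ (j + 1) - 1) / (q ^ (j + 1 + i) - 1) :=
  Real.iSup_nonneg fun _ => tsum_nonneg fun _ =>
    div_nonneg (pow_sub_one_nonneg hq _) (pow_sub_one_nonneg hq _)

lemma sum_range_div_pow_add_sub_one_lt (hq : 1 < q) {x : ℝ} (hx : 0 < x) {m : ℕ} (hm : m ≠ 0)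
    {b : ℝ} (hb : ⨆ j : ℕ, ∑' i : ℕ, (q ^ (j + 1) - 1) / (q ^ (j + 1 + i) - 1) < b) (N : ℕ) :
    ∑ k ∈ range N, x / (q ^ (m + k) - 1) < b * x / (q ^ m - 1) := by
  have hgm := pow_sub_one_pos hq hm
  obtain ⟨m, rfl⟩ : ∃ m', m = m' + 1 := ⟨m - 1, by omega⟩
  have hsup := le_ciSup ((bddAbove_range_tsum_pow_sub_one_div hq).mono
    (Set.range_comp_subset_range (· + 1) _)) m
  calc ∑ k ∈ range N, x / (q ^ (m + 1 + k) - 1)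
      ≤ x / (q ^ (m + 1) - 1) * ∑' i : ℕ, (q ^ (m + 1) - 1) / (q ^ (m + 1 + i) - 1) :=
        sum_range_div_pow_add_sub_one_le hq hx.le hm N
    _ < x / (q ^ (m + 1) - 1) * b := by gcongr; exact hsup.trans_lt hb
    _ = b * x / (q ^ (m + 1) - 1) := by ring

lemma natCast_mul_div_pow_sub_one_le (hq : 1 < q) {x : ℝ} (hx : 0 ≤ x) {j k : ℕ} (hj : 1 ≤ j)
    (hjk : j ≤ k) : k * x / (q ^ k - 1) ≤ j * x / (q ^ j - 1) := by
  simp only [mul_div_right_comm _ x]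
  exact mul_le_mul_of_nonneg_right
    (antitoneOn_natCast_div_pow_sub_one hq hj (le_trans hj hjk) hjk) hx

end PowSubOne

section Increments

variable {t c : ℕ → ℝ} {a : ℕ} {A : ℝ}

lemma add_sum_Icc_eq_add_sum_range
    (ht : ∀ j, a ≤ j → t j = A + ∑ i ∈ Icc 1 (j - a), c (a + i)) {k : ℕ} (hk : a ≤ k)
    (N : ℕ) : t (k + N) = t k + ∑ i ∈ range N, c (k + 1 + i) := by
  induction N with
  | zero => simp
  | succ N ih =>
    rw [← add_assoc, ht _ (by omega), show k + N + 1 - a = k + N - a + 1 by omega,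
      sum_Icc_succ_top (by omega), ← add_assoc, ← ht _ (by omega), ih, sum_range_succ,
      show a + (k + N - a + 1) = k + 1 + N by omega, add_assoc]

lemma sub_one_add_le_sum_range (hA : A ≤ c a) (ha : 1 ≤ a) (ht0 : ∀ j, j < a → t j = 0)
    (ht : ∀ j, a ≤ j → t j = A + ∑ i ∈ Icc 1 (j - a), c (a + i)) (n : ℕ) :
    t (a + n - 1) + c (a + n) ≤ ∑ k ∈ range (n + 1), c (a + k) := by
  rcases n with _ | n
  · simp [ht0 (a - 1) (by omega)]
  have hta : t a ≤ c a := by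
    rw [ht a le_rfl, Nat.sub_self, Icc_eq_empty (by omega), sum_empty, add_zero]
    exact hA
  have hshift : ∑ i ∈ range n, c (a + 1 + i) = ∑ k ∈ range n, c (a + (k + 1)) :=
    sum_congr rfl fun k _ => by rw [add_assoc, add_comm 1 k]
  rw [show a + (n + 1) - 1 = a + n by omega, add_sum_Icc_eq_add_sum_range ht le_rfl n,
    sum_range_succ', sum_range_succ, add_zero]
  linarith

lemma sub_one_sub_sub_one_add_eq_sum_range
    (ht : ∀ j, a ≤ j → t j = A + ∑ i ∈ Icc 1 (j - a), c (a + i)) {j m : ℕ} (hj : a < j)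
    (hjm : j ≤ m) :
    t (m - 1) - t (j - 1) + c m = ∑ k ∈ range (m + 1 - j), c (j + k) := by
  have hlast := add_sum_Icc_eq_add_sum_range ht (k := m - 1) (by omega) 1
  have hblock := add_sum_Icc_eq_add_sum_range ht (k := j - 1) (by omega) (m + 1 - j)
  rw [sum_range_one, add_zero, show m - 1 + 1 = m by omega] at hlast
  rw [show j - 1 + (m + 1 - j) = m by omega, show j - 1 + 1 = j by omega] at hblock
  linarith

end Increments

theorem blowup_key_bound_general (γ α : ℝ) (hγ : 0 < γ) (S : ℝ)
    (hS : S = ⨆ j : ℕ, ∑' i : ℕ, ((1 + γ) ^ (j + 1) - 1) / ((1 + γ) ^ (j + 1 + i) - 1))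
    (hα : 1 + 2 * S < α) (a : ℕ) (ha : a = ⌊α⌋₊)
    (t : ℕ → ℝ)
    (ht0 : ∀ j : ℕ, j < a → t j = 0)
    (ht : ∀ j : ℕ, a ≤ j → t j = (1 - (α - a)) * γ / ((1 + γ) ^ a - 1) +
      ∑ i ∈ Finset.Icc 1 (j - a), γ / ((1 + γ) ^ (a + i) - 1)) :
    ∀ n : ℕ, ∀ j : ℕ, 1 ≤ j → j ≤ a + n →
      (t (a + n - 1) - t (j - 1)) + γ / ((1 + γ) ^ (a + n) - 1) <
        min (j : ℝ) α * γ / ((1 + γ) ^ j - 1) := by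
  intro n j hj hjn
  subst hS
  have hq : (1 : ℝ) < 1 + γ := by linarith
  have hS0 := iSup_tsum_pow_sub_one_div_nonneg hq.le
  have ha1 : 1 ≤ a := ha ▸ Nat.le_floor (by push_cast; linarith)
  have haα : (a : ℝ) ≤ α := ha ▸ Nat.floor_le (by linarith)
  have hαa : α < a + 1 := ha ▸ Nat.lt_floor_add_one α
  rcases le_or_gt j a with hja | hja
  · have hA : (1 - (α - a)) * γ / ((1 + γ) ^ a - 1) ≤ γ / ((1 + γ) ^ a - 1) :=
      div_le_div_of_nonneg_right (by nlinarith) (pow_sub_one_nonneg hq.le a)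
    have hjα : (j : ℝ) ≤ α := le_trans (by exact_mod_cast hja) haα
    calc _ = t (a + n - 1) + γ / ((1 + γ) ^ (a + n) - 1) := by
          rw [ht0 (j - 1) (by omega), sub_zero]
      _ ≤ ∑ k ∈ range (n + 1), γ / ((1 + γ) ^ (a + k) - 1) :=
          sub_one_add_le_sum_range (c := fun m => γ / ((1 + γ) ^ m - 1)) hA ha1 ht0 ht n
      _ < a * γ / ((1 + γ) ^ a - 1) :=
          sum_range_div_pow_add_sub_one_lt hq hγ (by omega) (by linarith) _
      _ ≤ j * γ / ((1 + γ) ^ j - 1) := natCast_mul_div_pow_sub_one_le hq hγ.le hj hja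
      _ = _ := by rw [min_eq_left hjα]
  · have hαj : α ≤ j := hαa.le.trans (by exact_mod_cast hja)
    calc _ = ∑ k ∈ range (a + n + 1 - j), γ / ((1 + γ) ^ (j + k) - 1) :=
          sub_one_sub_sub_one_add_eq_sum_range (c := fun m => γ / ((1 + γ) ^ m - 1)) ht hja hjn
      _ < α * γ / ((1 + γ) ^ j - 1) :=
          sum_range_div_pow_add_sub_one_lt hq hγ (by omega) (by linarith) _
      _ = _ := by rw [min_eq_right hαj]

/-- Fix `γ > 0`, write `γ_x = (1+γ)^x − 1`, and let
`S = S(γ) = sup_{j≥1} Σ_{i=0}^∞ γ_j/γ_{j+i}`.  Let `α > 1 + 2S` with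
`γ_{a/2}/γ_a < 1/S`, where `a = ⌊α⌋`.  With `t_j = 0` for `0 ≤ j ≤ a − 1` and
`t_j = (1 − (α − a))·γ/γ_a + Σ_{i=1}^{j−a} γ/γ_{a+i}` for `j ≥ a`, one has, for every
`n ≥ 0` and every integer `1 ≤ j ≤ a + n`:
`min(j, α)·γ/γ_j > (t_{a+n−1} − t_{j−1}) + γ/γ_{a+n}`. -/
theorem blowup_key_bound (γ α : ℝ) (hγ : 0 < γ) (S : ℝ)
    (hS : S = ⨆ j : ℕ, ∑' i : ℕ, ((1 + γ) ^ (j + 1) - 1) / ((1 + γ) ^ (j + 1 + i) - 1))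
    (hα : 1 + 2 * S < α) (a : ℕ) (ha : a = ⌊α⌋₊)
    (hhalf : (1 + γ) ^ ((a : ℝ) / 2) - 1 < ((1 + γ) ^ a - 1) / S)
    (t : ℕ → ℝ)
    (ht0 : ∀ j : ℕ, j < a → t j = 0)
    (ht : ∀ j : ℕ, a ≤ j → t j = (1 - (α - a)) * γ / ((1 + γ) ^ a - 1) +
      ∑ i ∈ Finset.Icc 1 (j - a), γ / ((1 + γ) ^ (a + i) - 1)) :
    ∀ n : ℕ, ∀ j : ℕ, 1 ≤ j → j ≤ a + n →
      (t (a + n - 1) - t (j - 1)) + γ / ((1 + γ) ^ (a + n) - 1) <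
        min (j : ℝ) α * γ / ((1 + γ) ^ j - 1) :=
  blowup_key_bound_general γ α hγ S hS hα a ha t ht0 ht
end

section
/- (Bounds on Moran birth and death rates.) Let γ > 0, ρ ≥ 0, μ ∈ (0,1), η > 0, N ≥ 1 an integer, and let x : ℕ → ℕ satisfy Σ_j x_j = N. Suppose there exist integers m ≤ M with: (i) Σ_{j≠m} x_j ≤ μ^η·N, (ii) x_j = 0 for all j > M, and suppose m·μ^η < 1. Set w = Σ_i (1+γ)^i x_i, b_j^0(x) = (1+γ)^j x_j ((1+ρ)N − x_j)/w, d_j^0(x) = x_j·(Σ_{i≠j} (1+γ)^i x_i)/w, γ_j = (1+γ)^j − 1 for j ∈ ℤ, g_μ = γ_{M−m}·(M−m)·μ^η and h_μ = −γ_{−m}·m·μ^η. Then for every j ≠ m: (1+ρ−μ^η)(1+γ)^{j−m} x_j/(1 + g_μ) ≤ b_j^0(x) ≤ (1+ρ)(1+γ)^{j−m} x_j/(1 − h_μ), and (1 − M·μ^η)·x_j/(1 + g_μ) ≤ d_j^0(x) ≤ x_j. -/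
set_option maxHeartbeats 1000000 in
/-- Bounds on Moran birth and death rates.  Let `γ > 0`, `ρ ≥ 0`,
`μ ∈ (0,1)`, `η > 0`, `N ≥ 1` and let `x : ℕ → ℕ` be a configuration with
`Σ_j x_j = N`, `Σ_{j≠m} x_j ≤ μ^η N` and `x_j = 0` for `j > M`, where `m ≤ M` and
`m·μ^η < 1`.  With `w = Σ_i (1+γ)^i x_i`, birth rates
`b_j⁰(x) = (1+γ)^j x_j ((1+ρ)N − x_j)/w`, death rates
`d_j⁰(x) = x_j (Σ_{i≠j} (1+γ)^i x_i)/w = x_j (w − (1+γ)^j x_j)/w`,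
`γ_j = (1+γ)^j − 1`, `g_μ = γ_{M−m}(M−m)μ^η` and `h_μ = −γ_{−m} m μ^η`, one has, for every
`j ≠ m`:
`(1+ρ−μ^η)(1+γ)^{j−m} x_j/(1+g_μ) ≤ b_j⁰(x) ≤ (1+ρ)(1+γ)^{j−m} x_j/(1−h_μ)` and
`(1 − M μ^η) x_j/(1+g_μ) ≤ d_j⁰(x) ≤ x_j`. -/
theorem moran_rate_bounds (γ ρ μ η : ℝ) (hγ : 0 < γ) (hρ : 0 ≤ ρ) (hμ0 : 0 < μ)
    (hμ1 : μ < 1) (hη : 0 < η) (N : ℕ) (hN : 1 ≤ N) (m M : ℕ) (hmM : m ≤ M)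
    (x : ℕ → ℕ)
    (hsum : ∑ j ∈ Finset.range (M + 1), x j = N)
    (hsmall : ∑ j ∈ (Finset.range (M + 1)).erase m, (x j : ℝ) ≤ μ ^ η * N)
    (hzero : ∀ j : ℕ, M < j → x j = 0)
    (hm : (m : ℝ) * μ ^ η < 1) :
    ∀ j : ℕ, j ≠ m →
      (1 + ρ - μ ^ η) * (1 + γ) ^ ((j : ℤ) - (m : ℤ)) * (x j : ℝ) /
          (1 + ((1 + γ) ^ ((M : ℤ) - (m : ℤ)) - 1) * ((M : ℝ) - (m : ℝ)) * μ ^ η) ≤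
        (1 + γ) ^ j * (x j : ℝ) * ((1 + ρ) * N - (x j : ℝ)) /
          (∑ i ∈ Finset.range (M + 1), (1 + γ) ^ i * (x i : ℝ)) ∧
      (1 + γ) ^ j * (x j : ℝ) * ((1 + ρ) * N - (x j : ℝ)) /
          (∑ i ∈ Finset.range (M + 1), (1 + γ) ^ i * (x i : ℝ)) ≤
        (1 + ρ) * (1 + γ) ^ ((j : ℤ) - (m : ℤ)) * (x j : ℝ) /
          (1 - (-((1 + γ) ^ (-(m : ℤ)) - 1) * (m : ℝ) * μ ^ η)) ∧
      (1 - (M : ℝ) * μ ^ η) * (x j : ℝ) /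
          (1 + ((1 + γ) ^ ((M : ℤ) - (m : ℤ)) - 1) * ((M : ℝ) - (m : ℝ)) * μ ^ η) ≤
        (x j : ℝ) * ((∑ i ∈ Finset.range (M + 1), (1 + γ) ^ i * (x i : ℝ)) -
            (1 + γ) ^ j * (x j : ℝ)) /
          (∑ i ∈ Finset.range (M + 1), (1 + γ) ^ i * (x i : ℝ)) ∧
      (x j : ℝ) * ((∑ i ∈ Finset.range (M + 1), (1 + γ) ^ i * (x i : ℝ)) -
            (1 + γ) ^ j * (x j : ℝ)) /
          (∑ i ∈ Finset.range (M + 1), (1 + γ) ^ i * (x i : ℝ)) ≤ (x j : ℝ) := by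
  have hE0 : 0 < μ ^ η := Real.rpow_pos_of_pos hμ0 η
  have hE1 : μ ^ η < 1 := Real.rpow_lt_one hμ0.le hμ1 hη
  set E := μ ^ η with hEdef
  clear_value E
  have hb0 : (0:ℝ) < 1 + γ := by linarith
  have hb1 : (1:ℝ) ≤ 1 + γ := by linarith
  set W := ∑ i ∈ Finset.range (M + 1), (1 + γ) ^ i * (x i : ℝ) with hWdef
  clear_value W
  have hmmem : m ∈ Finset.range (M + 1) := Finset.mem_range.2 (by omega)
  -- rewrite the zpow expressions
  have hQ : (1 + γ) ^ ((M : ℤ) - (m : ℤ)) = (1 + γ) ^ (M - m) := by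
    rw [show (M : ℤ) - (m : ℤ) = ((M - m : ℕ) : ℤ) by omega, zpow_natCast]
  have hQ1 : (1:ℝ) ≤ (1 + γ) ^ (M - m) := one_le_pow₀ hb1
  have hPm1 : (1:ℝ) ≤ (1 + γ) ^ m := one_le_pow₀ hb1
  have hPm0 : (0:ℝ) < (1 + γ) ^ m := pow_pos hb0 m
  have hmneg : (1 + γ) ^ (-(m : ℤ)) = ((1 + γ) ^ m)⁻¹ := by
    rw [zpow_neg, zpow_natCast]
  set g := ((1 + γ) ^ ((M : ℤ) - (m : ℤ)) - 1) * ((M : ℝ) - (m : ℝ)) * E with hgdef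
  set h := -((1 + γ) ^ (-(m : ℤ)) - 1) * (m : ℝ) * E with hhdef
  clear_value g h
  have hMm0 : (0:ℝ) ≤ (M : ℝ) - m := by
    have : (m:ℝ) ≤ M := by exact_mod_cast hmM
    linarith
  have hg0 : 0 ≤ g := by
    rw [hgdef, hQ]
    exact mul_nonneg (mul_nonneg (by linarith) hMm0) hE0.le
  have hg1 : (0:ℝ) < 1 + g := by linarith
  have hh0 : 0 ≤ h := by
    rw [hhdef, hmneg]
    have h1 : ((1 + γ) ^ m)⁻¹ ≤ 1 := inv_le_one_of_one_le₀ hPm1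
    have hm0 : (0:ℝ) ≤ m := Nat.cast_nonneg m
    nlinarith [mul_nonneg (mul_nonneg (by linarith : (0:ℝ) ≤ 1 - ((1 + γ) ^ m)⁻¹) hm0) hE0.le]
  have hh1 : h < 1 := by
    rw [hhdef, hmneg]
    have h1 : 0 < ((1 + γ) ^ m)⁻¹ := by positivity
    have hm0 : (0:ℝ) ≤ m := Nat.cast_nonneg m
    nlinarith [mul_nonneg (mul_nonneg h1.le hm0) hE0.le, mul_nonneg hm0 hE0.le]
  have hNR : (1:ℝ) ≤ N := by exact_mod_cast hN
  have hN0 : (0:ℝ) < N := by linarith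
  -- total sum in ℝ
  have hsumR : ∑ i ∈ Finset.range (M + 1), (x i : ℝ) = N := by exact_mod_cast hsum
  -- key identity
  have hid : W - (1 + γ) ^ m * N =
      ∑ i ∈ (Finset.range (M + 1)).erase m, ((1 + γ) ^ i - (1 + γ) ^ m) * (x i : ℝ) := by
    rw [Finset.sum_erase _ (by ring)]
    rw [hWdef, ← hsumR, Finset.mul_sum, ← Finset.sum_sub_distrib]
    congr 1; ext i; ring
  set S := ∑ i ∈ (Finset.range (M + 1)).erase m, (x i : ℝ) with hSdef
  have hS0 : 0 ≤ S := Finset.sum_nonneg fun i _ => Nat.cast_nonneg _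
  clear_value S
  -- upper bound for W
  have hWU : W ≤ (1 + γ) ^ m * N * (1 + g) := by
    have step1 : ∑ i ∈ (Finset.range (M + 1)).erase m, ((1 + γ) ^ i - (1 + γ) ^ m) * (x i : ℝ)
        ≤ ((1 + γ) ^ M - (1 + γ) ^ m) * S := by
      rw [hSdef, Finset.mul_sum]
      apply Finset.sum_le_sum
      intro i hi
      have hiM : i ≤ M := by
        have := Finset.mem_range.1 (Finset.mem_of_mem_erase hi); omega
      have : (1 + γ) ^ i ≤ (1 + γ) ^ M := pow_le_pow_right₀ hb1 hiM
      have := Nat.cast_nonneg (α := ℝ) (x i)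
      nlinarith
    have hC0 : (0:ℝ) ≤ (1 + γ) ^ M - (1 + γ) ^ m := by
      have := pow_le_pow_right₀ hb1 hmM; linarith
    have step2 : ((1 + γ) ^ M - (1 + γ) ^ m) * S ≤ ((1 + γ) ^ M - (1 + γ) ^ m) * (E * N) :=
      mul_le_mul_of_nonneg_left hsmall hC0
    have hMsplit : (1 + γ) ^ M = (1 + γ) ^ m * (1 + γ) ^ (M - m) := by
      rw [← pow_add]; congr 1; omega
    have step3 : ((1 + γ) ^ M - (1 + γ) ^ m) * (E * N) ≤ (1 + γ) ^ m * N * g := by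
      rw [hgdef, hQ, hMsplit]
      rcases eq_or_lt_of_le hmM with hmm | hmm
      · subst hmm; simp
      · have hMm1 : (1:ℝ) ≤ (M : ℝ) - m := by
          have : (m:ℝ) + 1 ≤ M := by exact_mod_cast hmm
          linarith
        have hQm1 : (0:ℝ) ≤ (1 + γ) ^ (M - m) - 1 := by linarith
        have hnn : (0:ℝ) ≤ (1 + γ) ^ m * ((1 + γ) ^ (M - m) - 1) * (E * N) :=
          mul_nonneg (mul_nonneg hPm0.le hQm1) (mul_pos hE0 hN0).le
        nlinarith [mul_le_mul_of_nonneg_left hMm1 hnn]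
    have key := le_trans step1 (le_trans step2 step3)
    rw [← hid] at key
    linarith
  -- lower bound for W
  have hWL : (1 + γ) ^ m * N * (1 - h) ≤ W := by
    have step1 : (1 - (1 + γ) ^ m) * S
        ≤ ∑ i ∈ (Finset.range (M + 1)).erase m, ((1 + γ) ^ i - (1 + γ) ^ m) * (x i : ℝ) := by
      rw [hSdef, Finset.mul_sum]
      apply Finset.sum_le_sum
      intro i hi
      have : (1:ℝ) ≤ (1 + γ) ^ i := one_le_pow₀ hb1
      have := Nat.cast_nonneg (α := ℝ) (x i)
      nlinarith
    have hC0 : (1:ℝ) - (1 + γ) ^ m ≤ 0 := by linarith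
    have step2 : (1 - (1 + γ) ^ m) * (E * N) ≤ (1 - (1 + γ) ^ m) * S := by
      apply mul_le_mul_of_nonpos_left hsmall hC0
    have step3 : -((1 + γ) ^ m * N * h) ≤ (1 - (1 + γ) ^ m) * (E * N) := by
      rw [hhdef, hmneg]
      have hinv : (1 + γ) ^ m * ((1 + γ) ^ m)⁻¹ = 1 := mul_inv_cancel₀ hPm0.ne'
      rcases Nat.eq_zero_or_pos m with hm0 | hm0
      · subst hm0; simp
      · have hm1 : (1:ℝ) ≤ m := by exact_mod_cast hm0
        have e : -((1 + γ) ^ m * (N:ℝ) * (-(((1 + γ) ^ m)⁻¹ - 1) * (m:ℝ) * E))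
            = (1 - (1 + γ) ^ m) * ((m:ℝ) * (E * N)) := by
          field_simp
        rw [e]
        nlinarith [mul_nonneg (mul_nonneg (by linarith : (0:ℝ) ≤ (1 + γ) ^ m - 1)
          (by linarith : (0:ℝ) ≤ (m:ℝ) - 1)) (mul_pos hE0 hN0).le]
    have key := le_trans step3 (le_trans step2 step1)
    rw [← hid] at key
    linarith
  have hW0 : 0 < W :=
    lt_of_lt_of_le (mul_pos (mul_pos hPm0 hN0) (by linarith)) hWL
  -- per-j statement
  intro j hj
  have hz : (1 + γ) ^ ((j : ℤ) - (m : ℤ)) = (1 + γ) ^ j / (1 + γ) ^ m := by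
    rw [zpow_sub₀ hb0.ne', zpow_natCast, zpow_natCast]
  rcases Nat.eq_zero_or_pos (x j) with hxj | hxj
  · simp [hxj]
  -- now x j ≥ 1
  have hjM : j ≤ M := by
    by_contra hc
    exact absurd (hzero j (by omega)) (by omega)
  have hjmem : j ∈ (Finset.range (M + 1)).erase m :=
    Finset.mem_erase.2 ⟨hj, Finset.mem_range.2 (by omega)⟩
  have hxjS : (x j : ℝ) ≤ S := by
    rw [hSdef]
    exact Finset.single_le_sum (f := fun i => (x i : ℝ)) (fun i _ => Nat.cast_nonneg (x i)) hjmem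
  have hxjE : (x j : ℝ) ≤ E * N := le_trans hxjS hsmall
  have hxj0 : (0:ℝ) < x j := by exact_mod_cast hxj
  have hM1 : 1 ≤ M := by omega
  have hMR1 : (1:ℝ) ≤ M := by exact_mod_cast hM1
  have hA0 : (0:ℝ) < (1 + γ) ^ j * x j := by positivity
  have hAW : (1 + γ) ^ j * (x j : ℝ) ≤ W := by
    rw [hWdef]
    exact Finset.single_le_sum (f := fun i => (1 + γ) ^ i * (x i : ℝ))
      (fun i _ => by positivity) (Finset.mem_range.2 (by omega))
  have hxm : (1 - E) * N ≤ (x m : ℝ) := by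
    have : (x m : ℝ) + S = N := by
      rw [hSdef]; rw [← hsumR]
      exact Finset.add_sum_erase _ (fun i => (x i : ℝ)) hmmem
    linarith
  have hWA : (1 + γ) ^ m * ((1 - E) * N) ≤ W - (1 + γ) ^ j * (x j : ℝ) := by
    have hmem2 : m ∈ (Finset.range (M + 1)).erase j :=
      Finset.mem_erase.2 ⟨Ne.symm hj, hmmem⟩
    have h1 : (1 + γ) ^ m * (x m : ℝ) ≤
        ∑ i ∈ (Finset.range (M + 1)).erase j, (1 + γ) ^ i * (x i : ℝ) :=
      Finset.single_le_sum (f := fun i => (1 + γ) ^ i * (x i : ℝ))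
        (fun i _ => by positivity) hmem2
    have h2 : (1 + γ) ^ j * (x j : ℝ) +
        ∑ i ∈ (Finset.range (M + 1)).erase j, (1 + γ) ^ i * (x i : ℝ) = W := by
      rw [hWdef]
      exact Finset.add_sum_erase _ (fun i => (1 + γ) ^ i * (x i : ℝ))
        (Finset.mem_range.2 (by omega))
    linarith [mul_le_mul_of_nonneg_left hxm hPm0.le]
  refine ⟨?_, ?_, ?_, ?_⟩
  · -- birth lower bound
    have e1 : (1 + ρ - E) * (1 + γ) ^ ((j : ℤ) - (m : ℤ)) * (x j : ℝ) / (1 + g)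
        = ((1 + ρ - E) * ((1 + γ) ^ j * (x j : ℝ)) * N) / ((1 + γ) ^ m * N * (1 + g)) := by
      rw [hz]; field_simp
    rw [e1]
    have hxN : (x j : ℝ) ≤ N := by
      have : E * (N:ℝ) ≤ 1 * N := mul_le_mul_of_nonneg_right hE1.le hN0.le
      linarith
    have hrho : (0:ℝ) ≤ ρ * N := mul_nonneg hρ hN0.le
    apply div_le_div₀
    · refine mul_nonneg hA0.le ?_
      linarith
    · have h5 : (1 + ρ - E) * (N:ℝ) ≤ (1 + ρ) * N - (x j : ℝ) := by linarith [hxjE]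
      calc (1 + ρ - E) * ((1 + γ) ^ j * (x j : ℝ)) * N
          = ((1 + γ) ^ j * (x j : ℝ)) * ((1 + ρ - E) * N) := by ring
        _ ≤ ((1 + γ) ^ j * (x j : ℝ)) * ((1 + ρ) * N - (x j : ℝ)) :=
            mul_le_mul_of_nonneg_left h5 hA0.le
        _ = (1 + γ) ^ j * (x j : ℝ) * ((1 + ρ) * N - (x j : ℝ)) := by ring
    · exact hW0
    · exact hWU
  · -- birth upper bound
    have e2 : (1 + ρ) * (1 + γ) ^ ((j : ℤ) - (m : ℤ)) * (x j : ℝ) / (1 - h)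
        = ((1 + ρ) * ((1 + γ) ^ j * (x j : ℝ)) * N) / ((1 + γ) ^ m * N * (1 - h)) := by
      have hh2 : (1:ℝ) - h ≠ 0 := by linarith
      rw [hz]; field_simp
    rw [e2]
    apply div_le_div₀
    · positivity
    · calc (1 + γ) ^ j * (x j : ℝ) * ((1 + ρ) * N - (x j : ℝ))
          = ((1 + γ) ^ j * (x j : ℝ)) * ((1 + ρ) * N - (x j : ℝ)) := by ring
        _ ≤ ((1 + γ) ^ j * (x j : ℝ)) * ((1 + ρ) * N) :=
            mul_le_mul_of_nonneg_left (by linarith) hA0.le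
        _ = (1 + ρ) * ((1 + γ) ^ j * (x j : ℝ)) * N := by ring
    · exact mul_pos (mul_pos hPm0 hN0) (by linarith)
    · exact hWL
  · -- death lower bound
    have e3 : (1 - (M:ℝ) * E) * (x j : ℝ) / (1 + g)
        = ((1 - (M:ℝ) * E) * (x j : ℝ) * ((1 + γ) ^ m * N)) / ((1 + γ) ^ m * N * (1 + g)) := by
      field_simp
    rw [e3]
    have h6 : (1 - (M:ℝ) * E) * ((1 + γ) ^ m * N) ≤ W - (1 + γ) ^ j * (x j : ℝ) := by
      have hME : E ≤ (M:ℝ) * E := le_mul_of_one_le_left hE0.le hMR1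
      have h7 : (1 - (M:ℝ) * E) * ((1 + γ) ^ m * (N:ℝ)) ≤ (1 - E) * ((1 + γ) ^ m * N) :=
        mul_le_mul_of_nonneg_right (by linarith) (by positivity)
      have h8 : (1 - E) * ((1 + γ) ^ m * (N:ℝ)) = (1 + γ) ^ m * ((1 - E) * N) := by ring
      linarith [hWA]
    apply div_le_div₀
    · refine mul_nonneg hxj0.le ?_
      linarith [hAW]
    · calc (1 - (M:ℝ) * E) * (x j : ℝ) * ((1 + γ) ^ m * N)
          = (x j : ℝ) * ((1 - (M:ℝ) * E) * ((1 + γ) ^ m * N)) := by ring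
        _ ≤ (x j : ℝ) * (W - (1 + γ) ^ j * (x j : ℝ)) :=
            mul_le_mul_of_nonneg_left h6 hxj0.le
    · exact hW0
    · exact hWU
  · -- death upper bound
    rw [div_le_iff₀ hW0]
    have h9 : W - (1 + γ) ^ j * (x j : ℝ) ≤ W := by linarith [hA0]
    calc (x j : ℝ) * (W - (1 + γ) ^ j * (x j : ℝ))
        ≤ (x j : ℝ) * W := mul_le_mul_of_nonneg_left h9 hxj0.le
end

section
/- Let β > 0 and L > 1, and let x : [0,∞) → ℝ be differentiable with x'(t) = β·x(t)·(1 − x(t)) for all t ≥ 0 and x(0) = 1/L². Then x(t) ∈ (0,1) for all t ≥ 0, x is nondecreasing, and x(t) ≥ 1 − 1/L² for every t ≥ (4/β)·log L. That is, the logistic curve rises from level L^{−2} to level 1 − L^{−2} in time at most (4/β) log L. -/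
/-!
The logistic equation has the explicit solution
`t ↦ x₀ e^{βt} / (1 - x₀ + x₀ e^{βt})`, and since its vector field `u ↦ β u (1 - u)` is
locally Lipschitz, every solution with `x(0) = x₀` coincides with it. For this curve,
`x(t) ≥ 1 - x₀` as soon as `e^{βt} ≥ ((1 - x₀) / x₀)²`; with `x₀ = L⁻²` the right-hand side is
`(L² - 1)² < L⁴ = e^{4 log L}`.
-/

open Set Real

theorem ODE_solution_unique_of_locallyLipschitz {E : Type*} [NormedAddCommGroup E]
    [NormedSpace ℝ E] {v : E → E} {f g : ℝ → E} {a b : ℝ} (hv : LocallyLipschitz v)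
    (hf : ContinuousOn f (Icc a b)) (hf' : ∀ t ∈ Ico a b, HasDerivWithinAt f (v (f t)) (Ici t) t)
    (hg : ContinuousOn g (Icc a b)) (hg' : ∀ t ∈ Ico a b, HasDerivWithinAt g (v (g t)) (Ici t) t)
    (ha : f a = g a) :
    EqOn f g (Icc a b) := by
  -- `v` is Lipschitz on the compact union of the two trajectories.
  set s := f '' Icc a b ∪ g '' Icc a b
  have hs : IsCompact s :=
    (isCompact_Icc.image_of_continuousOn hf).union (isCompact_Icc.image_of_continuousOn hg)
  obtain ⟨K, hK⟩ := (hv.locallyLipschitzOn (s := s)).exists_lipschitzOnWith_of_compact hs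
  exact ODE_solution_unique_of_mem_Icc_right (v := fun _ ↦ v) (s := fun _ ↦ s) (fun _ _ ↦ hK)
    hf hf' (fun t ht ↦ .inl ⟨t, Ico_subset_Icc_self ht, rfl⟩)
    hg hg' (fun t ht ↦ .inr ⟨t, Ico_subset_Icc_self ht, rfl⟩) ha

noncomputable def logisticCurve (β x₀ t : ℝ) : ℝ :=
  x₀ * exp (β * t) / (1 - x₀ + x₀ * exp (β * t))

section logisticCurve

variable {β x₀ : ℝ}

@[simp]
theorem logisticCurve_zero (β x₀ : ℝ) : logisticCurve β x₀ 0 = x₀ := by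
  simp [logisticCurve]

theorem logisticCurve_denom_pos (hx₀ : x₀ ∈ Icc 0 1) (t : ℝ) :
    0 < 1 - x₀ + x₀ * exp (β * t) := by
  rcases hx₀.1.eq_or_lt with rfl | h₀
  · simp
  · nlinarith [hx₀.2, exp_pos (β * t)]

theorem hasDerivAt_logisticCurve (hx₀ : x₀ ∈ Icc 0 1) (t : ℝ) :
    HasDerivAt (logisticCurve β x₀)
      (β * logisticCurve β x₀ t * (1 - logisticCurve β x₀ t)) t := by
  have hexp : HasDerivAt (fun t ↦ x₀ * exp (β * t)) (x₀ * (exp (β * t) * β)) t := by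
    simpa using (((hasDerivAt_id t).const_mul β).exp).const_mul x₀
  have hD := logisticCurve_denom_pos (β := β) hx₀ t
  refine (hexp.div (hexp.const_add (1 - x₀)) hD.ne').congr_deriv ?_
  simp only [logisticCurve]
  field_simp

theorem logisticCurve_mem_Ioo (hx₀ : x₀ ∈ Ioo 0 1) (t : ℝ) :
    logisticCurve β x₀ t ∈ Ioo 0 1 := by
  have hD := logisticCurve_denom_pos (β := β) (Ioo_subset_Icc_self hx₀) t
  have hexp := exp_pos (β * t)
  refine ⟨div_pos (mul_pos hx₀.1 hexp) hD, (div_lt_one hD).2 ?_⟩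
  linarith [hx₀.2]

theorem monotone_logisticCurve (hβ : 0 ≤ β) (hx₀ : x₀ ∈ Ioo 0 1) :
    Monotone (logisticCurve β x₀) :=
  monotone_of_hasDerivAt_nonneg (hasDerivAt_logisticCurve (Ioo_subset_Icc_self hx₀)) fun t ↦
    have h := logisticCurve_mem_Ioo (β := β) hx₀ t
    mul_nonneg (mul_nonneg hβ h.1.le) (sub_nonneg.2 h.2.le)

theorem one_sub_le_logisticCurve (hx₀ : x₀ ∈ Ioo 0 1) {t : ℝ}
    (ht : ((1 - x₀) / x₀) ^ 2 ≤ exp (β * t)) :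
    1 - x₀ ≤ logisticCurve β x₀ t := by
  have hD := logisticCurve_denom_pos (β := β) (Ioo_subset_Icc_self hx₀) t
  rw [div_pow, div_le_iff₀ (by nlinarith [hx₀.1])] at ht
  rw [logisticCurve, le_div_iff₀ hD]
  nlinarith

theorem eqOn_logisticCurve_of_hasDerivAt (hx₀ : x₀ ∈ Icc 0 1) {x : ℝ → ℝ}
    (hderiv : ∀ t : ℝ, 0 ≤ t → HasDerivAt x (β * x t * (1 - x t)) t) (h0 : x 0 = x₀) :
    EqOn x (logisticCurve β x₀) (Ici 0) := by
  intro T hT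
  have hv : LocallyLipschitz fun u : ℝ ↦ β * u * (1 - u) :=
    (show ContDiff ℝ 1 fun u : ℝ ↦ β * u * (1 - u) by fun_prop).locallyLipschitz
  refine ODE_solution_unique_of_locallyLipschitz hv
    (fun t ht ↦ (hderiv t ht.1).continuousAt.continuousWithinAt)
    (fun t ht ↦ (hderiv t ht.1).hasDerivWithinAt)
    (fun t _ ↦ (hasDerivAt_logisticCurve hx₀ t).continuousAt.continuousWithinAt)
    (fun t _ ↦ (hasDerivAt_logisticCurve hx₀ t).hasDerivWithinAt) (by simp [h0]) ⟨hT, le_rfl⟩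

end logisticCurve

/-- Let `β > 0`, `L > 1` and let `x` solve the logistic ODE
`x' = β x (1 − x)` on `[0,∞)` with `x(0) = 1/L²`.  Then `x(t) ∈ (0,1)` for all `t ≥ 0`,
`x` is nondecreasing on `[0,∞)`, and `x(t) ≥ 1 − 1/L²` for every `t ≥ (4/β) log L`:
the logistic curve rises from `L⁻²` to `1 − L⁻²` in time at most `(4/β) log L`. -/
theorem logistic_rise_time (β L : ℝ) (hβ : 0 < β) (hL : 1 < L) (x : ℝ → ℝ)
    (hderiv : ∀ t : ℝ, 0 ≤ t → HasDerivAt x (β * x t * (1 - x t)) t)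
    (hx0 : x 0 = 1 / L ^ 2) :
    (∀ t : ℝ, 0 ≤ t → 0 < x t ∧ x t < 1) ∧
    MonotoneOn x (Set.Ici (0 : ℝ)) ∧
    (∀ t : ℝ, (4 / β) * Real.log L ≤ t → 1 - 1 / L ^ 2 ≤ x t) := by
  have hL0 : 0 < L := one_pos.trans hL
  have hx₀ : 1 / L ^ 2 ∈ Ioo (0 : ℝ) 1 :=
    ⟨by positivity, (div_lt_one (by positivity)).2 (by nlinarith)⟩
  have hx := eqOn_logisticCurve_of_hasDerivAt (Ioo_subset_Icc_self hx₀) hderiv hx0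
  refine ⟨fun t ht ↦ hx ht ▸ logisticCurve_mem_Ioo hx₀ t,
    ((monotone_logisticCurve hβ.le hx₀).monotoneOn _).congr hx.symm, fun t ht ↦ ?_⟩
  have hrise : 0 ≤ (4 / β) * log L := mul_nonneg (by positivity) (log_nonneg hL.le)
  rw [hx (hrise.trans ht)]
  refine one_sub_le_logisticCurve hx₀ ?_
  calc ((1 - 1 / L ^ 2) / (1 / L ^ 2)) ^ 2 = (L ^ 2 - 1) ^ 2 := by field_simp
    _ ≤ L ^ 4 := by nlinarith
    _ = exp (β * ((4 / β) * log L)) := by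
      rw [← mul_assoc, mul_div_cancel₀ _ hβ.ne', show (4 : ℝ) * log L = log (L ^ 4) by simp,
        exp_log (by positivity)]
    _ ≤ exp (β * t) := by gcongr
end

section
/- Let λ > 0, κ ≥ 0, ε ∈ (0,1) and T > 0, and let r : [0,T] → (0,1) be differentiable with r'(t) = r(t)·(1 − r(t))·λ/(1 + κ·r(t)) for all t ∈ [0,T] and r(0) = r_0 ∈ (0,1). If r(t) ≤ ε for all t ∈ [0,T], then r_0·e^{c t} ≤ r(t) ≤ r_0·e^{λ t} for all t ∈ [0,T], where c = (1 − ε)·λ/(1 + κ·ε). -/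
/-!
Along the solution `r` stays in `(0, ε]`, where the growth rate `r(1 - r)λ/(1 + κr)` is squeezed
between `c r` and `λ r`, because `x ↦ (1 - x)/(1 + κx)` decreases on `[0, ∞)` from `1`.
Grönwall's inequality turns these two linear differential inequalities into the exponential
bounds.
-/

open Set Real

theorem le_mul_exp_of_deriv_le_mul {f f' : ℝ → ℝ} {K a b : ℝ} (hf : ContinuousOn f (Icc a b))
    (hf' : ∀ x ∈ Ico a b, HasDerivWithinAt f (f' x) (Ici x) x)
    (bound : ∀ x ∈ Ico a b, f' x ≤ K * f x) :
    ∀ x ∈ Icc a b, f x ≤ f a * exp (K * (x - a)) := by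
  intro x hx
  rw [← gronwallBound_ε0]
  exact le_gronwallBound_of_liminf_deriv_right_le hf
    (fun x hx _ hr => (hf' x hx).liminf_right_slope_le hr) le_rfl
    (fun x hx => by simpa only [add_zero] using bound x hx) x hx

theorem mul_exp_le_of_mul_le_deriv {f f' : ℝ → ℝ} {K a b : ℝ} (hf : ContinuousOn f (Icc a b))
    (hf' : ∀ x ∈ Ico a b, HasDerivWithinAt f (f' x) (Ici x) x)
    (bound : ∀ x ∈ Ico a b, K * f x ≤ f' x) :
    ∀ x ∈ Icc a b, f a * exp (K * (x - a)) ≤ f x := by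
  intro x hx
  have := le_mul_exp_of_deriv_le_mul (K := K) hf.neg (fun x hx => (hf' x hx).neg)
    (fun x hx => by simpa only [Pi.neg_apply, mul_neg, neg_le_neg_iff] using bound x hx) x hx
  simpa only [Pi.neg_apply, neg_mul, neg_le_neg_iff] using this

theorem selection_rate_le_mul {lam κ r : ℝ} (hlam : 0 ≤ lam) (hκ : 0 ≤ κ) (hr : 0 ≤ r) :
    r * (1 - r) * lam / (1 + κ * r) ≤ lam * r := by
  rw [div_le_iff₀ (by positivity)]
  nlinarith [mul_nonneg (mul_nonneg hlam hκ) (mul_nonneg hr hr), mul_nonneg hlam (mul_nonneg hr hr)]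

theorem mul_le_selection_rate {lam κ ε r : ℝ} (hlam : 0 ≤ lam) (hκ : 0 ≤ κ) (hr : 0 ≤ r)
    (hrε : r ≤ ε) :
    (1 - ε) * lam / (1 + κ * ε) * r ≤ r * (1 - r) * lam / (1 + κ * r) := by
  have hε : 0 ≤ ε := hr.trans hrε
  have hdecr : (1 - ε) / (1 + κ * ε) ≤ (1 - r) / (1 + κ * r) := by
    rw [div_le_div_iff₀ (by positivity) (by positivity)]
    nlinarith
  calc (1 - ε) * lam / (1 + κ * ε) * r = lam * r * ((1 - ε) / (1 + κ * ε)) := by ring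
    _ ≤ lam * r * ((1 - r) / (1 + κ * r)) := by gcongr
    _ = r * (1 - r) * lam / (1 + κ * r) := by ring

theorem selection_ode_exponential_bounds_general (lam κ ε T : ℝ) (hlam : 0 < lam) (hκ : 0 ≤ κ)
    (r : ℝ → ℝ) (r₀ : ℝ)
    (hr0 : r 0 = r₀)
    (hmem : ∀ t ∈ Set.Icc (0 : ℝ) T, r t ∈ Set.Ioo (0 : ℝ) 1)
    (hderiv : ∀ t ∈ Set.Icc (0 : ℝ) T,
      HasDerivAt r (r t * (1 - r t) * lam / (1 + κ * r t)) t)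
    (hsmall : ∀ t ∈ Set.Icc (0 : ℝ) T, r t ≤ ε) :
    ∀ t ∈ Set.Icc (0 : ℝ) T,
      r₀ * Real.exp ((1 - ε) * lam / (1 + κ * ε) * t) ≤ r t ∧
      r t ≤ r₀ * Real.exp (lam * t) := by
  subst hr0
  have hcont : ContinuousOn r (Icc 0 T) := fun t ht =>
    (hderiv t ht).continuousAt.continuousWithinAt
  have hderiv' : ∀ t ∈ Ico 0 T, HasDerivWithinAt r _ (Ici t) t := fun t ht =>
    (hderiv t (Ico_subset_Icc_self ht)).hasDerivWithinAt
  have hnonneg : ∀ t ∈ Ico 0 T, 0 ≤ r t := fun t ht => (hmem t (Ico_subset_Icc_self ht)).1.le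
  intro t ht
  constructor
  · simpa only [sub_zero] using mul_exp_le_of_mul_le_deriv hcont hderiv'
      (fun s hs => mul_le_selection_rate hlam.le hκ (hnonneg s hs)
        (hsmall s (Ico_subset_Icc_self hs))) t ht
  · simpa only [sub_zero] using le_mul_exp_of_deriv_le_mul hcont hderiv'
      (fun s hs => selection_rate_le_mul hlam.le hκ (hnonneg s hs)) t ht

/-- Let `λ > 0`, `κ ≥ 0`, `ε ∈ (0,1)`, `T > 0`, and let
`r : [0,T] → (0,1)` solve `r' = r(1 − r)λ/(1 + κ r)` with `r(0) = r₀ ∈ (0,1)`.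
If `r(t) ≤ ε` on `[0,T]`, then `r₀ e^{c t} ≤ r(t) ≤ r₀ e^{λ t}` on `[0,T]`, where
`c = (1 − ε)λ/(1 + κ ε)`. -/
theorem selection_ode_exponential_bounds (lam κ ε T : ℝ) (hlam : 0 < lam) (hκ : 0 ≤ κ)
    (hε : ε ∈ Set.Ioo (0 : ℝ) 1) (hT : 0 < T) (r : ℝ → ℝ) (r₀ : ℝ)
    (hr₀mem : r₀ ∈ Set.Ioo (0 : ℝ) 1) (hr0 : r 0 = r₀)
    (hmem : ∀ t ∈ Set.Icc (0 : ℝ) T, r t ∈ Set.Ioo (0 : ℝ) 1)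
    (hderiv : ∀ t ∈ Set.Icc (0 : ℝ) T,
      HasDerivAt r (r t * (1 - r t) * lam / (1 + κ * r t)) t)
    (hsmall : ∀ t ∈ Set.Icc (0 : ℝ) T, r t ≤ ε) :
    ∀ t ∈ Set.Icc (0 : ℝ) T,
      r₀ * Real.exp ((1 - ε) * lam / (1 + κ * ε) * t) ≤ r t ∧
      r t ≤ r₀ * Real.exp (lam * t) :=
  selection_ode_exponential_bounds_general lam κ ε T hlam hκ r r₀ hr0 hmem hderiv hsmall
end

section
/- Let λ > 0, κ ≥ 0 and ε ∈ (0, 1/2), and let r : [0,∞) → (0,1) be differentiable with r'(t) = r(t)·(1 − r(t))·λ/(1 + κ·r(t)) for all t ≥ 0 and r(0) = ε. Then r is nondecreasing and r(t) ≥ 1 − ε for every t ≥ (2(1+κ)/λ)·log((1−ε)/ε). That is, the solution rises from level ε to level 1 − ε in time at most (2(1+κ)/λ)·log((1−ε)/ε). -/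
/-!
In logit coordinates `logit x = log x - log (1 - x)` the logistic equation `x' = c x (1 - x)` moves
at constant speed `c`. Since `1 ≤ 1 + κ r ≤ 1 + κ`, the selection rate dominates the logistic
rate with `c = λ / (1 + κ)`, so `logit r` grows at least at speed `c`. Going from `logit ε` to
`logit (1 - ε) = -logit ε` takes the distance `2 log ((1 - ε) / ε)`, whence the bound.
-/

open Real Set

noncomputable def logit (x : ℝ) : ℝ := log x - log (1 - x)

lemma logit_one_sub (x : ℝ) : logit (1 - x) = -logit x := by
  simp only [logit, sub_sub_cancel]
  ring

lemma strictMonoOn_logit : StrictMonoOn logit (Ioo 0 1) := by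
  intro x hx y hy hxy
  have hlog : log x < log y := log_lt_log hx.1 hxy
  have hlog_one_sub : log (1 - y) < log (1 - x) := log_lt_log (by linarith [hy.2]) (by linarith)
  simp only [logit]
  linarith

lemma HasDerivAt.logit {r : ℝ → ℝ} {r' t : ℝ} (hr : HasDerivAt r r' t) (ht : r t ∈ Ioo 0 1) :
    HasDerivAt (fun s => logit (r s)) (r' / (r t * (1 - r t))) t := by
  have h0 : r t ≠ 0 := ht.1.ne'
  have h1 : 1 - r t ≠ 0 := (sub_pos.2 ht.2).ne'
  refine ((hr.log h0).sub ((hr.const_sub 1).log h1)).congr_deriv ?_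
  field_simp
  ring

lemma monotoneOn_Ici_of_hasDerivAt_nonneg {f f' : ℝ → ℝ} {a : ℝ}
    (hf : ∀ t, a ≤ t → HasDerivAt f (f' t) t) (hf' : ∀ t, a ≤ t → 0 ≤ f' t) :
    MonotoneOn f (Ici a) := by
  refine monotoneOn_of_hasDerivWithinAt_nonneg (convex_Ici a) (f' := f')
    (fun t ht => (hf t ht).continuousAt.continuousWithinAt) ?_ ?_ <;> rw [interior_Ici]
  · exact fun t ht => (hf t (le_of_lt ht)).hasDerivWithinAt
  · exact fun t ht => hf' t (le_of_lt ht)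

theorem logit_add_mul_le_of_hasDerivAt {r r' : ℝ → ℝ} {c : ℝ}
    (hmem : ∀ t, 0 ≤ t → r t ∈ Ioo 0 1) (hderiv : ∀ t, 0 ≤ t → HasDerivAt r (r' t) t)
    (hrate : ∀ t, 0 ≤ t → c * (r t * (1 - r t)) ≤ r' t) {t : ℝ} (ht : 0 ≤ t) :
    logit (r 0) + c * t ≤ logit (r t) := by
  have hmono : MonotoneOn (fun s => logit (r s) - c * s) (Ici 0) := by
    refine monotoneOn_Ici_of_hasDerivAt_nonneg
      (fun s hs => ((hderiv s hs).logit (hmem s hs)).sub ((hasDerivAt_id s).const_mul c))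
      (fun s hs => ?_)
    have hpos : 0 < r s * (1 - r s) := mul_pos (hmem s hs).1 (sub_pos.2 (hmem s hs).2)
    rw [mul_one, sub_nonneg, le_div_iff₀ hpos]
    exact hrate s hs
  have := hmono self_mem_Ici ht ht
  simp only [mul_zero, sub_zero] at this
  linarith

noncomputable def selectionRate (lam κ x : ℝ) : ℝ := x * (1 - x) * lam / (1 + κ * x)

lemma logisticRate_le_selectionRate {lam κ x : ℝ} (hlam : 0 ≤ lam) (hκ : 0 ≤ κ)
    (hx : x ∈ Ioo 0 1) : lam / (1 + κ) * (x * (1 - x)) ≤ selectionRate lam κ x := by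
  have hpos : 0 ≤ x * (1 - x) := (mul_pos hx.1 (sub_pos.2 hx.2)).le
  have hden : 1 + κ * x ≤ 1 + κ := by nlinarith [hx.2]
  calc lam / (1 + κ) * (x * (1 - x))
      ≤ lam / (1 + κ * x) * (x * (1 - x)) := by
        gcongr
        nlinarith [hx.1]
    _ = selectionRate lam κ x := by unfold selectionRate; ring

/-- Let `λ > 0`, `κ ≥ 0`, `ε ∈ (0, 1/2)`, and let `r : [0,∞) → (0,1)`
solve `r' = r(1 − r)λ/(1 + κ r)` with `r(0) = ε`.  Then `r` is nondecreasing and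
`r(t) ≥ 1 − ε` for every `t ≥ (2(1+κ)/λ)·log((1−ε)/ε)`: the solution rises from `ε` to
`1 − ε` in time at most `(2(1+κ)/λ)·log((1−ε)/ε)`. -/
theorem selection_ode_rise_time (lam κ ε : ℝ) (hlam : 0 < lam) (hκ : 0 ≤ κ)
    (hε : ε ∈ Set.Ioo (0 : ℝ) (1 / 2)) (r : ℝ → ℝ)
    (hmem : ∀ t : ℝ, 0 ≤ t → r t ∈ Set.Ioo (0 : ℝ) 1)
    (hderiv : ∀ t : ℝ, 0 ≤ t →
      HasDerivAt r (r t * (1 - r t) * lam / (1 + κ * r t)) t)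
    (hr0 : r 0 = ε) :
    MonotoneOn r (Set.Ici (0 : ℝ)) ∧
    ∀ t : ℝ, (2 * (1 + κ) / lam) * Real.log ((1 - ε) / ε) ≤ t → 1 - ε ≤ r t := by
  obtain ⟨hε0, hε2⟩ := hε
  set c := lam / (1 + κ)
  have hc : 0 < c := by positivity
  have hrate : ∀ t, 0 ≤ t → c * (r t * (1 - r t)) ≤ selectionRate lam κ (r t) := fun t ht =>
    logisticRate_le_selectionRate hlam.le hκ (hmem t ht)
  have hrate_nonneg : ∀ t, 0 ≤ t → 0 ≤ selectionRate lam κ (r t) := fun t ht =>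
    (mul_nonneg hc.le (mul_pos (hmem t ht).1 (sub_pos.2 (hmem t ht).2)).le).trans (hrate t ht)
  refine ⟨monotoneOn_Ici_of_hasDerivAt_nonneg hderiv hrate_nonneg, fun t hT => ?_⟩
  have hL : log ((1 - ε) / ε) = logit (1 - ε) := by
    rw [log_div (by linarith) hε0.ne', logit, sub_sub_cancel]
  have hLpos : 0 < logit (1 - ε) := hL ▸ log_pos ((one_lt_div hε0).2 (by linarith))
  rw [hL] at hT
  have ht : 0 ≤ t := le_trans (by positivity) hT
  have hct : 2 * logit (1 - ε) ≤ c * t :=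
    calc 2 * logit (1 - ε) = c * (2 * (1 + κ) / lam * logit (1 - ε)) := by
          simp only [c]; field_simp
      _ ≤ c * t := by gcongr
  have hgrow := logit_add_mul_le_of_hasDerivAt hmem hderiv hrate ht
  rw [hr0, ← neg_neg (logit ε), ← logit_one_sub] at hgrow
  exact (strictMonoOn_logit.le_iff_le ⟨by linarith, by linarith⟩ (hmem t ht)).1 (by linarith)
end

section
/- Let k ≥ 1 be an integer and let μ_1, …, μ_k be strictly positive real numbers. Let X_1, …, X_k be independent random variables, with X_i exponentially distributed with rate μ_i. Then lim_{t → 0+} P(X_1 + ⋯ + X_k ≤ t)/t^k = (Π_{i=1}^k μ_i)/k!. (Equivalently, the distribution function of the sum behaves like μ_1⋯μ_k t^k/k! for small t, the multistage-carcinogenesis approximation of Armitage and Doll.) -/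
/-!
The joint law of `(X_1, …, X_k)` is the product of the exponential laws. The event
`X_1 + ⋯ + X_k ≤ t` only charges the solid simplex `{x ≥ 0, ∑ x_i ≤ t}`, of volume `t^k / k!`,
and there (as every `x_i ≤ t`) the product density `∏ μ_i e^{-μ_i x_i}` lies between
`(∏ μ_i) e^{-(∑ μ_i) t}` and `∏ μ_i`. Hence `P(X_1 + ⋯ + X_k ≤ t) / t^k` is squeezed between
`(∏ μ_i / k!) e^{-(∑ μ_i) t}` and `∏ μ_i / k!`.
-/

open MeasureTheory ProbabilityTheory Real Set Filter Topology
open scoped NNReal ENNReal Nat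

namespace MeasureTheory.Measure

theorem pi_mono_fin {n : ℕ} {α : Fin n → Type*} [∀ i, MeasurableSpace (α i)]
    {ν ν' : ∀ i, Measure (α i)} [∀ i, SigmaFinite (ν i)] [∀ i, SigmaFinite (ν' i)]
    (h : ∀ i, ν i ≤ ν' i) : Measure.pi ν ≤ Measure.pi ν' := by
  induction n with
  | zero => exact (pi_of_empty ν).le.trans (pi_of_empty ν').ge
  | succ n ih =>
    rw [← ((measurePreserving_piFinSuccAbove ν 0).symm _).map_eq,
      ← ((measurePreserving_piFinSuccAbove ν' 0).symm _).map_eq]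
    exact map_mono (prod_mono (h 0) (ih fun j => h _)) (MeasurableEquiv.measurable _)

theorem pi_mono {ι : Type*} [Fintype ι] {α : ι → Type*} [∀ i, MeasurableSpace (α i)]
    {ν ν' : ∀ i, Measure (α i)} [∀ i, SigmaFinite (ν i)] [∀ i, SigmaFinite (ν' i)]
    (h : ∀ i, ν i ≤ ν' i) : Measure.pi ν ≤ Measure.pi ν' := by
  let e := (Fintype.equivFin ι).symm
  rw [← (measurePreserving_piCongrLeft ν e).map_eq, ← (measurePreserving_piCongrLeft ν' e).map_eq]
  exact map_mono (pi_mono_fin fun j => h (e j)) (MeasurableEquiv.measurable _)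

theorem pi_nnreal_smul {ι : Type*} [Fintype ι] {α : ι → Type*} [∀ i, MeasurableSpace (α i)]
    (c : ι → ℝ≥0) (ν : ∀ i, Measure (α i)) [∀ i, SigmaFinite (ν i)] :
    Measure.pi (fun i => c i • ν i) = (∏ i, c i) • Measure.pi ν := by
  refine pi_eq fun s hs => ?_
  simp only [smul_apply, pi_pi, Finset.prod_mul_distrib, ENNReal.smul_def, smul_eq_mul,
    ENNReal.ofNNReal_finsetProd]

theorem pi_smul_restrict_apply {ι : Type*} [Fintype ι] {α : Type*} [MeasureSpace α]
    [SigmaFinite (volume : Measure α)] (c : ι → ℝ≥0) (s : ι → Set α) {S : Set (ι → α)}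
    (hS : MeasurableSet S) :
    Measure.pi (fun i => c i • volume.restrict (s i)) S
      = (∏ i, (c i : ℝ≥0∞)) * volume (S ∩ univ.pi s) := by
  rw [pi_nnreal_smul, ← restrict_pi_pi, ← volume_pi, smul_apply, restrict_apply hS,
    ENNReal.smul_def, smul_eq_mul, ENNReal.ofNNReal_finsetProd]

end MeasureTheory.Measure

def solidSimplex (n : ℕ) (t : ℝ) : Set (Fin n → ℝ) := {x | (∀ i, 0 ≤ x i) ∧ ∑ i, x i ≤ t}

theorem measurableSet_solidSimplex (n : ℕ) (t : ℝ) : MeasurableSet (solidSimplex n t) := by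
  unfold solidSimplex
  measurability

theorem solidSimplex_eq_empty {n : ℕ} {t : ℝ} (ht : t < 0) : solidSimplex n t = ∅ :=
  eq_empty_of_forall_notMem fun _ hx =>
    ht.not_ge ((Finset.sum_nonneg fun i _ => hx.1 i).trans hx.2)

theorem lintegral_Icc_sub_pow_div_factorial (n : ℕ) {t : ℝ} (ht : 0 ≤ t) :
    ∫⁻ a in Icc 0 t, ENNReal.ofReal ((t - a) ^ n / n !)
      = ENNReal.ofReal (t ^ (n + 1) / (n + 1)!) := by
  have hcont : Continuous fun a : ℝ => (t - a) ^ n / n ! := by fun_prop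
  have hnonneg : ∀ a ∈ Icc 0 t, 0 ≤ (t - a) ^ n / n ! := fun a ha => by
    have := sub_nonneg.2 ha.2
    positivity
  rw [← ofReal_integral_eq_lintegral_ofReal hcont.integrableOn_Icc
      (ae_restrict_of_forall_mem measurableSet_Icc hnonneg),
    integral_Icc_eq_integral_Ioc, ← intervalIntegral.integral_of_le ht,
    intervalIntegral.integral_div, intervalIntegral.integral_comp_sub_left (fun x => x ^ n)]
  rw [integral_pow, sub_self, sub_zero, zero_pow n.succ_ne_zero, sub_zero, Nat.factorial_succ]
  push_cast
  field_simp

theorem volume_solidSimplex (n : ℕ) {t : ℝ} (ht : 0 ≤ t) :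
    volume (solidSimplex n t) = ENNReal.ofReal (t ^ n / n !) := by
  induction n generalizing t with
  | zero => simp [solidSimplex, ht, volume_pi]
  | succ n ih =>
    set A : Set (ℝ × (Fin n → ℝ)) := {p | 0 ≤ p.1 ∧ p.2 ∈ solidSimplex n (t - p.1)}
    let e := MeasurableEquiv.piFinSuccAbove (fun _ : Fin (n + 1) => ℝ) 0
    have hpre : e ⁻¹' A = solidSimplex (n + 1) t := by
      ext x
      simp [e, A, solidSimplex, Fin.forall_fin_succ, Fin.sum_univ_succ,
        MeasurableEquiv.piFinSuccAbove_apply, Fin.tail, le_sub_iff_add_le', and_assoc]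
    have hA : MeasurableSet A := by
      have := (measurableSet_solidSimplex (n + 1) t).preimage e.symm.measurable
      rwa [← hpre, MeasurableEquiv.symm_preimage_preimage] at this
    have hslice (a : ℝ) : volume (Prod.mk a ⁻¹' A)
        = (Icc 0 t).indicator (fun a => ENNReal.ofReal ((t - a) ^ n / n !)) a := by
      by_cases ha : a ∈ Icc 0 t
      · rw [indicator_of_mem ha, ← ih (sub_nonneg.2 ha.2)]
        congr 1
        ext y
        simp [A, ha.1]
      · rw [indicator_of_notMem ha]
        refine measure_mono_null ?_ measure_empty
        rintro y ⟨ha0, hy⟩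
        rw [mem_Icc, not_and, not_le] at ha
        rwa [solidSimplex_eq_empty (sub_neg.2 (ha ha0))] at hy
    rw [← hpre, (volume_preserving_piFinSuccAbove (fun _ => ℝ) 0).measure_preimage_equiv,
      Measure.volume_eq_prod, Measure.prod_apply hA]
    simp_rw [hslice]
    rw [lintegral_indicator measurableSet_Icc, lintegral_Icc_sub_pow_div_factorial n ht]

theorem measurableSet_sum_le (n : ℕ) (t : ℝ) : MeasurableSet {x : Fin n → ℝ | ∑ i, x i ≤ t} :=
  measurableSet_le (by fun_prop) measurable_const

namespace ProbabilityTheory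

theorem expMeasure_eq_withDensity (r : ℝ) :
    expMeasure r = volume.withDensity (exponentialPDF r) := rfl

theorem expMeasure_le_smul_restrict_Ici {r : ℝ} (hr : 0 ≤ r) :
    expMeasure r ≤ r.toNNReal • volume.restrict (Ici 0) := by
  rw [ENNReal.smul_def, ← withDensity_const, ← withDensity_indicator measurableSet_Ici,
    expMeasure_eq_withDensity]
  refine withDensity_mono (ae_of_all _ fun x => ?_)
  rcases lt_or_ge x 0 with hx | hx
  · simp [exponentialPDF_of_neg hx]
  · rw [exponentialPDF_of_nonneg hx, indicator_of_mem (mem_Ici.2 hx)]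
    refine ENNReal.ofReal_le_ofReal (mul_le_of_le_one_right hr (exp_le_one_iff.2 ?_))
    nlinarith

theorem smul_restrict_Icc_le_expMeasure {r : ℝ} (hr : 0 ≤ r) (t : ℝ) :
    (r * exp (-(r * t))).toNNReal • volume.restrict (Icc 0 t) ≤ expMeasure r := by
  rw [ENNReal.smul_def, ← withDensity_const, ← withDensity_indicator measurableSet_Icc,
    expMeasure_eq_withDensity]
  refine withDensity_mono (ae_of_all _ fun x => ?_)
  by_cases hx : x ∈ Icc 0 t
  · rw [indicator_of_mem hx, exponentialPDF_of_nonneg hx.1]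
    refine ENNReal.ofReal_le_ofReal (mul_le_mul_of_nonneg_left (exp_le_exp.2 ?_) hr)
    nlinarith [hx.2]
  · simp [indicator_of_notMem hx]

theorem map_eq_expMeasure_of_tail {Ω : Type*} [MeasurableSpace Ω] {P : Measure Ω}
    [IsProbabilityMeasure P] {X : Ω → ℝ} (hX : Measurable X) {r : ℝ} (hr : 0 < r)
    (htail : ∀ t, 0 ≤ t → P {ω | t < X ω} = ENNReal.ofReal (exp (-r * t))) :
    P.map X = expMeasure r := by
  have := isProbabilityMeasure_expMeasure hr
  have := Measure.isProbabilityMeasure_map (μ := P) hX.aemeasurable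
  refine Measure.eq_of_cdf _ _ (StieltjesFunction.ext fun x => ?_)
  have hcompl : X ⁻¹' Iic x = {ω | x < X ω}ᶜ := by
    ext ω
    simp
  rw [cdf_expMeasure_eq hr, cdf_eq_real, measureReal_def, Measure.map_apply hX measurableSet_Iic,
    hcompl, prob_compl_eq_one_sub (measurableSet_lt measurable_const hX)]
  split_ifs with hx
  · have hexp_le : ENNReal.ofReal (exp (-(r * x))) ≤ 1 :=
      ENNReal.ofReal_le_one.2 (exp_le_one_iff.2 (by nlinarith))
    rw [htail x hx, neg_mul, ENNReal.toReal_sub_of_le hexp_le ENNReal.one_ne_top,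
      ENNReal.toReal_one, ENNReal.toReal_ofReal (exp_pos _).le]
  · have hpos : P {ω | 0 < X ω} = 1 := by simp [htail 0 le_rfl]
    have hone : P {ω | x < X ω} = 1 :=
      le_antisymm prob_le_one (hpos ▸ measure_mono fun ω (h : 0 < X ω) => (not_le.1 hx).trans h)
    simp [hone]

theorem pi_expMeasure_sum_le {n : ℕ} {μ : Fin n → ℝ} (hμ : ∀ i, 0 < μ i) {t : ℝ} (ht : 0 ≤ t) :
    Measure.pi (fun i => expMeasure (μ i)) {x | ∑ i, x i ≤ t}
      ≤ ENNReal.ofReal ((∏ i, μ i) / n ! * t ^ n) := by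
  have := fun i => isProbabilityMeasure_expMeasure (hμ i)
  have hS : {x | ∑ i, x i ≤ t} ∩ univ.pi (fun _ => Ici 0) = solidSimplex n t := by
    ext x
    simp [solidSimplex, Pi.le_def, and_comm]
  refine (Measure.pi_mono (fun i => expMeasure_le_smul_restrict_Ici (hμ i).le) _).trans_eq ?_
  rw [Measure.pi_smul_restrict_apply _ _ (measurableSet_sum_le n t), hS,
    volume_solidSimplex n ht]
  change (∏ i, ENNReal.ofReal (μ i)) * _ = _
  rw [← ENNReal.ofReal_prod_of_nonneg fun i _ => (hμ i).le,
    ← ENNReal.ofReal_mul (Finset.prod_nonneg fun i _ => (hμ i).le)]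
  ring_nf

theorem le_pi_expMeasure_sum {n : ℕ} {μ : Fin n → ℝ} (hμ : ∀ i, 0 < μ i) {t : ℝ} (ht : 0 ≤ t) :
    ENNReal.ofReal ((∏ i, μ i) / n ! * exp (-(∑ i, μ i) * t) * t ^ n)
      ≤ Measure.pi (fun i => expMeasure (μ i)) {x | ∑ i, x i ≤ t} := by
  have := fun i => isProbabilityMeasure_expMeasure (hμ i)
  have hS : {x | ∑ i, x i ≤ t} ∩ univ.pi (fun _ => Icc 0 t) = solidSimplex n t := by
    ext x
    simp only [mem_inter_iff, mem_ofPred_eq, Set.mem_pi, mem_univ, forall_const, mem_Icc,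
      solidSimplex]
    exact ⟨fun h => ⟨fun i => (h.2 i).1, h.1⟩, fun h => ⟨h.2, fun i => ⟨h.1 i,
      (Finset.single_le_sum (fun j _ => h.1 j) (Finset.mem_univ i)).trans h.2⟩⟩⟩
  have hc (i : Fin n) : 0 ≤ μ i * exp (-(μ i * t)) := (mul_pos (hμ i) (exp_pos _)).le
  refine le_of_eq_of_le ?_
    (Measure.pi_mono (fun i => smul_restrict_Icc_le_expMeasure (hμ i).le t) _)
  rw [Measure.pi_smul_restrict_apply _ _ (measurableSet_sum_le n t), hS,
    volume_solidSimplex n ht]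
  change _ = (∏ i, ENNReal.ofReal (μ i * exp (-(μ i * t)))) * _
  rw [← ENNReal.ofReal_prod_of_nonneg fun i _ => hc i,
    ← ENNReal.ofReal_mul (Finset.prod_nonneg fun i _ => hc i),
    Finset.prod_mul_distrib, ← exp_sum, Finset.sum_neg_distrib, ← Finset.sum_mul]
  ring_nf

theorem tendsto_pi_expMeasure_sum_le_div_pow {n : ℕ} {μ : Fin n → ℝ} (hμ : ∀ i, 0 < μ i) :
    Tendsto (fun t => (Measure.pi (fun i => expMeasure (μ i)) {x | ∑ i, x i ≤ t}).toReal / t ^ n)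
      (𝓝[>] 0) (𝓝 ((∏ i, μ i) / n !)) := by
  have := fun i => isProbabilityMeasure_expMeasure (hμ i)
  have hprod : 0 < ∏ i, μ i := Finset.prod_pos fun i _ => hμ i
  have hlower : Tendsto (fun t => (∏ i, μ i) / n ! * exp (-(∑ i, μ i) * t)) (𝓝[>] 0)
      (𝓝 ((∏ i, μ i) / n !)) := by
    have hcont : Continuous fun t => (∏ i, μ i) / n ! * exp (-(∑ i, μ i) * t) := by fun_prop
    simpa using (hcont.tendsto 0).mono_left nhdsWithin_le_nhds
  refine tendsto_of_tendsto_of_tendsto_of_le_of_le' hlower tendsto_const_nhds ?_ ?_ <;>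
    filter_upwards [self_mem_nhdsWithin] with t (ht : 0 < t)
  · rw [le_div_iff₀ (by positivity)]
    exact (ENNReal.ofReal_le_iff_le_toReal (measure_ne_top _ _)).1 (le_pi_expMeasure_sum hμ ht.le)
  · rw [div_le_iff₀ (by positivity)]
    exact ENNReal.toReal_le_of_le_ofReal (by positivity) (pi_expMeasure_sum_le hμ ht.le)

end ProbabilityTheory

open MeasureTheory ProbabilityTheory in
theorem armitage_doll_small_time_general {Ω : Type*} [MeasureSpace Ω]
    [IsProbabilityMeasure (ℙ : Measure Ω)] (k : ℕ)
    (μ : Fin k → ℝ) (hμ : ∀ i, 0 < μ i) (X : Fin k → Ω → ℝ)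
    (hmeas : ∀ i, Measurable (X i))
    (hindep : iIndepFun X ℙ)
    (hexp : ∀ i, ∀ t : ℝ, 0 ≤ t →
      ℙ {ω | t < X i ω} = ENNReal.ofReal (Real.exp (-μ i * t))) :
    Filter.Tendsto (fun t : ℝ => (ℙ {ω | ∑ i, X i ω ≤ t}).toReal / t ^ k)
      (nhdsWithin 0 (Set.Ioi 0))
      (nhds ((∏ i, μ i) / (Nat.factorial k : ℝ))) := by
  have hlaw : Measure.map (fun ω i => X i ω) ℙ = Measure.pi fun i => expMeasure (μ i) := by
    rw [(iIndepFun_iff_map_fun_eq_pi_map fun i => (hmeas i).aemeasurable).1 hindep]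
    exact congrArg Measure.pi (funext fun i => map_eq_expMeasure_of_tail (hmeas i) (hμ i) (hexp i))
  have hsum (t : ℝ) : ℙ {ω | ∑ i, X i ω ≤ t}
      = Measure.pi (fun i => expMeasure (μ i)) {x | ∑ i, x i ≤ t} := by
    rw [← hlaw, Measure.map_apply (measurable_pi_lambda _ hmeas) (measurableSet_sum_le k t)]
    rfl
  simp_rw [hsum]
  exact tendsto_pi_expMeasure_sum_le_div_pow hμ

open MeasureTheory ProbabilityTheory in
/-- Armitage–Doll small-time asymptotics.  Let `k ≥ 1`, let
`μ_1, …, μ_k > 0`, and let `X_1, …, X_k` be independent random variables with `X_i`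
exponential of rate `μ_i` (i.e. `P(X_i > t) = e^{−μ_i t}` for `t ≥ 0`).  Then
`P(X_1 + ⋯ + X_k ≤ t)/t^k → (Π_i μ_i)/k!` as `t → 0+`. -/
theorem armitage_doll_small_time {Ω : Type*} [MeasureSpace Ω]
    [IsProbabilityMeasure (ℙ : Measure Ω)] (k : ℕ) (hk : 1 ≤ k)
    (μ : Fin k → ℝ) (hμ : ∀ i, 0 < μ i) (X : Fin k → Ω → ℝ)
    (hmeas : ∀ i, Measurable (X i))
    (hindep : iIndepFun X ℙ)
    (hexp : ∀ i, ∀ t : ℝ, 0 ≤ t →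
      ℙ {ω | t < X i ω} = ENNReal.ofReal (Real.exp (-μ i * t))) :
    Filter.Tendsto (fun t : ℝ => (ℙ {ω | ∑ i, X i ω ≤ t}).toReal / t ^ k)
      (nhdsWithin 0 (Set.Ioi 0))
      (nhds ((∏ i, μ i) / (Nat.factorial k : ℝ))) :=
  armitage_doll_small_time_general k μ hμ X hmeas hindep hexp
end
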